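/- arXiv:2308.05228 — 9 statements merged into one kernel-verified Lean document; each statement's English description precedes it below -/
import Mathlib

section
/- Let b ≥ 2 and t ≥ 1 be integers. Choose a positive integer m with b^m / (m(b−1)+1) ≥ t, and set d = b(b^m − 1)(m(b−1)+1). Then for every 0 ≤ j ≤ t−1, the base-b digit sum of (d+1) + jd equals m(b−1)+1. -/
/-- Base-`b` digit sum of `n`. -/
def sdig (b n : ℕ) : ℕ := (Nat.digits b n).sum

/-- A positive integer `n` is `b`-anti-Niven if it is coprime to its base-`b` digit sum. -/
def AntiNiven (b n : ℕ) : Prop := 0 < n ∧ Nat.gcd n (sdig b n) = 1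

lemma sdig_mul_add (b : ℕ) (hb : 2 ≤ b) (q r : ℕ) (hr : r < b) :
    sdig b (b * q + r) = r + sdig b q := by
  rcases Nat.eq_zero_or_pos (b * q + r) with h | h
  · have hq : q = 0 := by
      rcases Nat.mul_eq_zero.mp (by omega : b * q = 0) with h' | h' <;> omega
    have hr0 : r = 0 := by omega
    simp [hq, hr0, sdig]
  · unfold sdig
    rw [Nat.digits_def' hb h]
    have h1 : (b * q + r) % b = r := by
      rw [Nat.mul_add_mod, Nat.mod_eq_of_lt hr]
    have h2 : (b * q + r) / b = q := by
      rw [Nat.mul_add_div (by omega : 0 < b), Nat.div_eq_of_lt hr]; omega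
    rw [h1, h2]
    simp

lemma sdig_complement (b : ℕ) (hb : 2 ≤ b) :
    ∀ m M : ℕ, M < b ^ m → sdig b M + sdig b (b ^ m - 1 - M) = m * (b - 1) := by
  intro m
  induction m with
  | zero =>
    intro M hM
    simp only [pow_zero] at hM
    have : M = 0 := by omega
    subst this; simp [sdig]
  | succ m ih =>
    intro M hM
    have hbpos : 0 < b := by omega
    set q := M / b with hq
    set r := M % b with hr
    have hrb : r < b := Nat.mod_lt _ hbpos
    have hM' : M = b * q + r := (Nat.div_add_mod M b).symm
    have hqlt : q < b ^ m := by
      rw [hq]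
      apply Nat.div_lt_of_lt_mul
      calc M < b ^ (m+1) := hM
        _ = b * b ^ m := by ring
    have hbm : 1 ≤ b ^ m := Nat.one_le_pow _ _ hbpos
    have hp : b ^ (m+1) = b * b ^ m := by ring
    have e1 : b * (b ^ m - 1 - q) + b * (q + 1) = b * b ^ m := by
      rw [← Nat.mul_add]; congr 1; omega
    have e2 : b * q + b * 1 = b * (q + 1) := by ring
    have hc : b ^ (m+1) - 1 - M = b * (b ^ m - 1 - q) + (b - 1 - r) := by omega
    have hMd : sdig b M = r + sdig b q := by rw [hM']; exact sdig_mul_add b hb q r hrb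
    rw [hMd, hc, sdig_mul_add b hb _ _ (by omega)]
    have := ih q hqlt
    have e4 : (m+1) * (b-1) = m * (b-1) + (b-1) := by ring
    omega

lemma sdig_add_pow_mul (b : ℕ) (hb : 2 ≤ b) :
    ∀ m a c : ℕ, a < b ^ m → sdig b (a + b ^ m * c) = sdig b a + sdig b c := by
  intro m
  induction m with
  | zero =>
    intro a c ha
    simp only [pow_zero] at ha
    have : a = 0 := by omega
    subst this; simp [sdig]
  | succ m ih =>
    intro a c ha
    have hbpos : 0 < b := by omega
    set q := a / b with hq
    set r := a % b with hr
    have hrb : r < b := Nat.mod_lt _ hbpos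
    have ha' : a = b * q + r := (Nat.div_add_mod a b).symm
    have hqlt : q < b ^ m := by
      rw [hq]
      apply Nat.div_lt_of_lt_mul
      calc a < b ^ (m+1) := ha
        _ = b * b ^ m := by ring
    have key : a + b ^ (m+1) * c = b * (q + b ^ m * c) + r := by
      rw [ha']; ring
    have had : sdig b a = r + sdig b q := by rw [ha']; exact sdig_mul_add b hb q r hrb
    rw [key, sdig_mul_add b hb _ _ hrb, ih q c hqlt, had]
    omega

lemma sdig_mul_pred_pow (b m N : ℕ) (hb : 2 ≤ b) (hN : 1 ≤ N) (hNle : N ≤ b ^ m) :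
    sdig b (N * (b ^ m - 1)) = m * (b - 1) := by
  have h3 : 1 ≤ b ^ m := le_trans hN hNle
  have e1 : N * (b ^ m - 1) + N * 1 = N * b ^ m := by
    rw [← Nat.mul_add]; congr 1; omega
  have e2 : b ^ m * (N - 1) + b ^ m * 1 = b ^ m * N := by
    rw [← Nat.mul_add]; congr 1; omega
  have e3 : N * b ^ m = b ^ m * N := Nat.mul_comm _ _
  have hkey : N * (b ^ m - 1) = (b ^ m - N) + b ^ m * (N - 1) := by omega
  rw [hkey, sdig_add_pow_mul b hb m _ _ (by omega)]
  have := sdig_complement b hb m (N - 1) (by omega)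
  have h4 : b ^ m - 1 - (N - 1) = b ^ m - N := by omega
  rw [h4] at this
  omega

theorem stmt_3 (b t m : ℕ) (hb : 2 ≤ b) (ht : 1 ≤ t) (hm : 0 < m)
    (hbig : t * (m * (b - 1) + 1) ≤ b ^ m)
    (d : ℕ) (hd : d = b * (b ^ m - 1) * (m * (b - 1) + 1)) :
    ∀ j : ℕ, j ≤ t - 1 → sdig b ((d + 1) + j * d) = m * (b - 1) + 1 := by
  intro j hj
  set s := m * (b - 1) + 1 with hs
  set N := (j + 1) * s with hN
  have hjt : j + 1 ≤ t := by omega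
  have hNle : N ≤ b ^ m := le_trans (Nat.mul_le_mul_right _ hjt) hbig
  have hN1 : 1 ≤ N := Nat.mul_pos (by omega) (by omega)
  have key : (d + 1) + j * d = b * (N * (b ^ m - 1)) + 1 := by
    rw [hd, hN]; ring
  rw [key, sdig_mul_add b hb _ _ (by omega),
    sdig_mul_pred_pow b m N hb hN1 hNle]
  omega
end

section
/- Let b ≥ 2. For every positive integer t, there exist positive integers n and d such that every term of the arithmetic progression {n + jd : 0 ≤ j ≤ t−1} is b-anti-Niven. -/
lemma sdig_zero (b : ℕ) : sdig b 0 = 0 := by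
  simp [sdig]

lemma sdig_add_mul_of_lt {b u : ℕ} (hb : 1 < b) (hu : u < b) (v : ℕ) :
    sdig b (u + b * v) = u + sdig b v := by
  by_cases h : u = 0 ∧ v = 0
  · simp [h.1, h.2, sdig]
  · simp [sdig, Nat.digits_add b hb u v hu (not_and_or.mp h)]

lemma sdig_add_pow_mul_s4 {b k x : ℕ} (hb : 1 < b) (hx : x < b ^ k) (y : ℕ) :
    sdig b (x + b ^ k * y) = sdig b x + sdig b y := by
  have hlen := Nat.length_digitsAppend hb k hx
  have hdig : ∀ d ∈ b.digitsAppend k x ++ b.digits y, d < b := by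
    intro d hd
    rcases List.mem_append.mp hd with hd | hd
    · exact Nat.lt_of_mem_digitsAppend hb k d hd
    · exact Nat.digits_lt_base hb hd
  have hof : Nat.ofDigits b (b.digitsAppend k x ++ b.digits y) = x + b ^ k * y := by
    rw [Nat.ofDigits_append, hlen, Nat.digitsAppend, Nat.ofDigits_append_replicate_zero,
      Nat.ofDigits_digits, Nat.ofDigits_digits]
  rw [sdig, ← hof, Nat.sum_digits_ofDigits_eq_sum hb ⟨rfl, hdig⟩]
  simp [Nat.digitsAppend, sdig]

lemma sdig_pow_sub_one_sub_add {b : ℕ} (hb : 1 < b) {k x : ℕ} (hx : x < b ^ k) :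
    sdig b (b ^ k - 1 - x) + sdig b x = k * (b - 1) := by
  induction k generalizing x with
  | zero => simp [Nat.lt_one_iff.mp (by simpa using hx), sdig_zero]
  | succ k ih =>
    obtain ⟨u, v, hu, rfl⟩ : ∃ u v, u < b ∧ x = u + b * v :=
      ⟨x % b, x / b, Nat.mod_lt x (by omega), (Nat.mod_add_div x b).symm⟩
    rw [pow_succ'] at hx ⊢
    have hv : v < b ^ k := by nlinarith
    obtain ⟨w, hw⟩ := Nat.exists_eq_add_of_lt hv
    have hcompl : b * b ^ k - 1 - (u + b * v) = (b - 1 - u) + b * (b ^ k - 1 - v) := by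
      have : b * (v + w + 1) = b * v + b * w + b := by ring
      rw [hw, show v + w + 1 - 1 - v = w by omega]
      omega
    have := ih hv
    rw [hcompl, sdig_add_mul_of_lt hb (by omega), sdig_add_mul_of_lt hb hu, add_mul]
    omega

lemma sdig_mul_pow_sub_one {b k c : ℕ} (hb : 1 < b) (hc : 0 < c) (hck : c ≤ b ^ k) :
    sdig b (c * (b ^ k - 1)) = k * (b - 1) := by
  have hsplit : c * (b ^ k - 1) = (b ^ k - 1 - (c - 1)) + b ^ k * (c - 1) := by
    obtain ⟨c, rfl⟩ : ∃ c', c = c' + 1 := ⟨c - 1, by omega⟩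
    obtain ⟨m, hm⟩ := Nat.exists_eq_add_of_le hck
    rw [hm, Nat.add_sub_cancel, show c + 1 + m - 1 = c + m by omega, Nat.add_sub_cancel_left]
    ring
  rw [hsplit, sdig_add_pow_mul_s4 hb (by omega), sdig_pow_sub_one_sub_add hb (by omega)]

lemma sdig_ofDigits_pow {b k : ℕ} (hb : 1 < b) {L : List ℕ} (hL : ∀ x ∈ L, x < b ^ k) :
    sdig b (Nat.ofDigits (b ^ k) L) = (L.map (sdig b)).sum := by
  induction L with
  | nil => simp [sdig_zero]
  | cons x L ih =>
    rw [Nat.ofDigits_cons, sdig_add_pow_mul_s4 hb (hL x List.mem_cons_self),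
      ih fun y hy => hL y (List.mem_cons_of_mem x hy), List.map_cons, List.sum_cons]

def repunit (B s : ℕ) : ℕ := Nat.ofDigits B (List.replicate s 1)

lemma sdig_repunit_pow {b k : ℕ} (hb : 1 < b) (hk : k ≠ 0) (s : ℕ) :
    sdig b (repunit (b ^ k) s) = s := by
  have hone : sdig b 1 = 1 := by simp [sdig, Nat.digits_of_lt b 1 one_ne_zero hb]
  rw [repunit, sdig_ofDigits_pow hb, List.map_replicate, hone, List.sum_replicate, smul_eq_mul,
    mul_one]
  intro x hx
  rw [List.eq_of_mem_replicate hx]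
  exact Nat.one_lt_pow hk hb

lemma repunit_modEq {B n : ℕ} (h : B ≡ 1 [MOD n]) (s : ℕ) : repunit B s ≡ s [MOD n] := by
  simpa [repunit, Nat.ofDigits_one] using Nat.ofDigits_modEq' B 1 n h (List.replicate s 1)

lemma antiNiven_of_sdig_eq_prime_pow {b n p e : ℕ} (hp : p.Prime) (hn : 0 < n)
    (hsd : sdig b n = p ^ e) (hpn : ¬ p ∣ n) : AntiNiven b n :=
  ⟨hn, hsd ▸ Nat.Coprime.pow_right e (Nat.coprime_comm.mp (hp.coprime_iff_not_dvd.mpr hpn))⟩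

lemma antiNiven_repunit_add_mul {b p q s e c : ℕ} (hb : 1 < b) (hp : p.Prime) (hq : q ≠ 0)
    (hbq : b ^ q ≡ 1 [MOD p]) (hpa : ¬ p ∣ q * (b - 1)) (he : e ≠ 0)
    (hs : s + q * (b - 1) = p ^ e) (hc : 0 < c) (hcq : c ≤ b ^ q) :
    AntiNiven b (repunit (b ^ q) s + b ^ (q * s) * (c * (b ^ q - 1))) := by
  have hbq1 : 1 < b ^ q := Nat.one_lt_pow hq hb
  have hlt : repunit (b ^ q) s < b ^ (q * s) := by
    simpa [repunit, pow_mul] using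
      Nat.ofDigits_lt_base_pow_length hbq1 (l := List.replicate s 1) (by simp [hbq1])
  have hD : p ∣ b ^ q - 1 := (Nat.modEq_iff_dvd' hbq1.le).mp hbq.symm
  have hmod : repunit (b ^ q) s + b ^ (q * s) * (c * (b ^ q - 1)) ≡ s [MOD p] := by
    simpa using (repunit_modEq hbq s).add
      (Nat.modEq_zero_iff_dvd.mpr (dvd_mul_of_dvd_right (dvd_mul_of_dvd_right hD c) _))
  refine antiNiven_of_sdig_eq_prime_pow (e := e) hp ?_ ?_ ?_
  · have : 0 < c * (b ^ q - 1) := Nat.mul_pos hc (by omega)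
    positivity
  · rw [sdig_add_pow_mul_s4 hb hlt, sdig_repunit_pow hb hq, sdig_mul_pow_sub_one hb hc hcq, hs]
  · rw [hmod.dvd_iff dvd_rfl]
    intro hps
    exact hpa ((Nat.dvd_add_right hps).mp (hs ▸ dvd_pow_self p he))

theorem stmt_4 (b : ℕ) (hb : 2 ≤ b) :
    ∀ t : ℕ, 0 < t → ∃ n d : ℕ, 0 < n ∧ 0 < d ∧
      ∀ j : ℕ, j ≤ t - 1 → AntiNiven b (n + j * d) := by
  intro t ht
  obtain ⟨p, hpge, hp⟩ := Nat.exists_infinite_primes (b + t + 1)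
  set q := p - 1
  have hfermat : b ^ q ≡ 1 [MOD p] := Nat.ModEq.pow_card_sub_one_eq_one hp
    (Nat.coprime_comm.mp (Nat.coprime_of_lt_prime (by omega) (by omega) hp))
  have hpa : ¬ p ∣ q * (b - 1) := by
    rw [hp.dvd_mul]
    rintro (h | h) <;> exact Nat.not_dvd_of_pos_of_lt (by omega) (by omega) h
  have ha : q * (b - 1) ≠ 0 := fun h => hpa (h ▸ dvd_zero p)
  obtain ⟨s, hs⟩ : ∃ s, s + q * (b - 1) = p ^ (q * (b - 1)) :=
    ⟨_, Nat.sub_add_cancel (Nat.lt_pow_self hp.one_lt).le⟩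
  have htq : t ≤ b ^ q := (show t ≤ q by omega).trans (Nat.lt_pow_self (by omega)).le
  have hD : 0 < b ^ q - 1 := Nat.sub_pos_of_lt (Nat.one_lt_pow (by omega) (by omega))
  refine ⟨repunit (b ^ q) s + b ^ (q * s) * (b ^ q - 1), b ^ (q * s) * (b ^ q - 1),
    by positivity, by positivity, fun j hj => ?_⟩
  have hterm : repunit (b ^ q) s + b ^ (q * s) * (b ^ q - 1) + j * (b ^ (q * s) * (b ^ q - 1)) =
      repunit (b ^ q) s + b ^ (q * s) * ((j + 1) * (b ^ q - 1)) := by ring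
  rw [hterm]
  exact antiNiven_repunit_add_mul (by omega) hp (by omega) hfermat hpa ha hs (by omega) (by omega)
end

section
/- Let b > 2 and let d be a positive integer. Let p be the smallest prime such that p divides b−1 and p does not divide d. Then every arithmetic progression with common difference d consisting entirely of b-anti-Niven numbers has length at most p−1. -/
theorem Nat.exists_lt_dvd_add_mul {p d : ℕ} [NeZero p] (h : p.Coprime d) (n : ℕ) :
    ∃ j < p, p ∣ n + j * d := by
  let u := ZMod.unitOfCoprime d h.symm
  refine ⟨((-n : ZMod p) * ↑u⁻¹).val, ZMod.val_lt _, ?_⟩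
  rw [← ZMod.natCast_eq_zero_iff]
  push_cast
  rw [ZMod.natCast_val, ZMod.cast_id, ← ZMod.coe_unitOfCoprime d h.symm, mul_assoc,
    Units.inv_mul, mul_one, add_neg_cancel]

theorem dvd_sdig_iff {b p : ℕ} (hb : 0 < b) (hp : 1 < p) (hpb : p ∣ b - 1) (m : ℕ) :
    p ∣ sdig b m ↔ p ∣ m := by
  have hbp : b % p = 1 := by
    rw [← (Nat.modEq_iff_dvd' hb).2 hpb, Nat.mod_eq_of_lt hp]
  exact (Nat.dvd_iff_dvd_digits_sum p b hbp m).symm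

theorem not_antiNiven_of_dvd {b p m : ℕ} (hb : 0 < b) (hp : 1 < p) (hpb : p ∣ b - 1)
    (hpm : p ∣ m) : ¬ AntiNiven b m := by
  rintro ⟨-, hgcd⟩
  have hp_one : p ∣ 1 := hgcd ▸ Nat.dvd_gcd hpm ((dvd_sdig_iff hb hp hpb m).2 hpm)
  exact hp.ne' (Nat.dvd_one.1 hp_one)

theorem stmt_5_general (b d p : ℕ) (hb : 2 < b)
    (hp : p.Prime) (hpb : p ∣ b - 1) (hpd : ¬ p ∣ d) :
    ∀ n t : ℕ, (∀ j : ℕ, j < t → AntiNiven b (n + j * d)) → t ≤ p - 1 := by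
  intro n t hAP
  have : NeZero p := ⟨hp.ne_zero⟩
  obtain ⟨j, hjp, hdvd⟩ := Nat.exists_lt_dvd_add_mul (hp.coprime_iff_not_dvd.2 hpd) n
  by_contra! ht
  exact not_antiNiven_of_dvd (by omega) hp.one_lt hpb hdvd (hAP j (by omega))

theorem stmt_5 (b d p : ℕ) (hb : 2 < b) (hd : 0 < d)
    (hp : p.Prime) (hpb : p ∣ b - 1) (hpd : ¬ p ∣ d)
    (hmin : ∀ q : ℕ, q.Prime → q ∣ b - 1 → ¬ q ∣ d → p ≤ q) :
    ∀ n t : ℕ, (∀ j : ℕ, j < t → AntiNiven b (n + j * d)) → t ≤ p - 1 :=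
  stmt_5_general b d p hb hp hpb hpd
end

section
/- Let b > 2 and let p be the smallest prime dividing b−1. Then there exist infinitely many positive integers N such that N, N+1, …, N+p−2 are all b-anti-Niven. In particular, there exist infinitely many sequences of p−1 consecutive b-anti-Niven numbers. -/
lemma sdig_pow {b : ℕ} (hb : 2 ≤ b) (k : ℕ) : sdig b (b ^ k) = 1 := by
  induction k with
  | zero =>
    simp only [pow_zero, sdig]
    rw [Nat.digits_def' (by omega : 1 < b) one_pos]
    simp [Nat.mod_eq_of_lt (by omega : 1 < b), Nat.div_eq_of_lt (by omega : 1 < b)]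
  | succ n ih =>
    rw [sdig, Nat.digits_def' (by omega : 1 < b) (by positivity), pow_succ,
      Nat.mul_mod_left, Nat.mul_div_cancel _ (by omega : 0 < b)]
    simpa [sdig] using ih

lemma sdig_pow_add {b : ℕ} (hb : 2 ≤ b) {k j : ℕ} (hk : 0 < k) (hj : j < b) :
    sdig b (b ^ k + j) = 1 + j := by
  obtain ⟨k', rfl⟩ : ∃ k', k = k' + 1 := ⟨k - 1, by omega⟩
  have h : b ^ (k' + 1) + j = b * b ^ k' + j := by ring
  rw [sdig, h, Nat.digits_def' (by omega : 1 < b) (by positivity),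
    Nat.mul_add_mod, Nat.mod_eq_of_lt hj, Nat.mul_add_div (by omega : 0 < b),
    Nat.div_eq_of_lt hj, Nat.add_zero]
  have := sdig_pow hb k'
  rw [sdig] at this
  simp [this, Nat.add_comm]

theorem stmt_6 (b p : ℕ) (hb : 2 < b) (hp : p.Prime) (hpb : p ∣ b - 1)
    (hmin : ∀ q : ℕ, q.Prime → q ∣ b - 1 → p ≤ q) :
    {N : ℕ | 0 < N ∧ ∀ j : ℕ, j < p - 1 → AntiNiven b (N + j)}.Infinite := by
  have hple : p ≤ b - 1 := Nat.le_of_dvd (by omega) hpb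
  have hp2 : 2 ≤ p := hp.two_le
  set F := (p - 1).factorial with hF
  have hFpos : 0 < F := Nat.factorial_pos _
  apply Set.infinite_of_injective_forall_mem (f := fun m : ℕ => b ^ (1 + m * F))
  · intro m n h
    have := Nat.pow_right_injective (by omega : 2 ≤ b) h
    have : m * F = n * F := by omega
    exact Nat.eq_of_mul_eq_mul_right hFpos this
  · intro m
    set k := 1 + m * F with hk
    have hkpos : 0 < k := by omega
    refine ⟨by positivity, ?_⟩
    intro j hj
    have hjb : j < b := by omega
    refine ⟨by positivity, ?_⟩
    rw [sdig_pow_add (by omega) hkpos hjb]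
    by_contra hg
    set g := Nat.gcd (b ^ k + j) (1 + j) with hgdef
    have hq : g.minFac.Prime := Nat.minFac_prime hg
    set q := g.minFac with hqdef
    have hq1 : q ∣ b ^ k + j := (Nat.minFac_dvd g).trans (Nat.gcd_dvd_left _ _)
    have hq2 : q ∣ 1 + j := (Nat.minFac_dvd g).trans (Nat.gcd_dvd_right _ _)
    have hqlt : q < p := lt_of_le_of_lt (Nat.le_of_dvd (by omega) hq2) (by omega)
    -- q does not divide b
    have hqb : ¬ q ∣ b := by
      intro hdb
      have h1 : q ∣ b ^ k := dvd_pow hdb (by omega)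
      have h2 : q ∣ j := (Nat.dvd_add_right h1).mp hq1
      have h3 : q ∣ 1 := by
        have := Nat.dvd_sub hq2 h2
        simpa using this
      exact Nat.Prime.not_dvd_one hq h3
    have hdvd : q ∣ b ^ k - 1 := by
      have h := Nat.dvd_sub hq1 hq2
      have hge : 1 ≤ b ^ k := Nat.one_le_pow _ _ (by omega)
      have : b ^ k + j - (1 + j) = b ^ k - 1 := by omega
      rwa [this] at h
    haveI : Fact q.Prime := ⟨hq⟩
    have hxne : (b : ZMod q) ≠ 0 := by
      rw [Ne, ZMod.natCast_eq_zero_iff]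
      exact hqb
    have hfermat : (b : ZMod q) ^ (q - 1) = 1 := ZMod.pow_card_sub_one_eq_one hxne
    have h2q : 2 ≤ q := hq.two_le
    have hdF : (q - 1) ∣ F := Nat.dvd_factorial (by omega) (by omega)
    have hxF : (b : ZMod q) ^ F = 1 := by
      obtain ⟨c, hc⟩ := hdF
      rw [hc, pow_mul, hfermat, one_pow]
    have hxk : (b : ZMod q) ^ k = (b : ZMod q) := by
      rw [hk, pow_add, pow_mul', hxF, one_pow, mul_one, pow_one]
    have hxk1 : (b : ZMod q) ^ k = 1 := by
      have : ((b ^ k - 1 : ℕ) : ZMod q) = 0 :=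
        (ZMod.natCast_eq_zero_iff _ _).mpr hdvd
      rw [Nat.cast_sub (Nat.one_le_pow _ _ (by omega))] at this
      push_cast at this
      linear_combination this
    have hqb1 : q ∣ b - 1 := by
      rw [← ZMod.natCast_eq_zero_iff, Nat.cast_sub (by omega : 1 ≤ b)]
      push_cast
      rw [← hxk, hxk1]
      ring
    exact absurd (hmin q hq hqb1) (by omega)
end

section
/- Let b ≥ 6 be even and let 3 ≤ d ≤ b/2 be an odd integer. Then every arithmetic progression with common difference d consisting entirely of b-anti-Niven numbers has length at most ⌈2b/d⌉ + 2. -/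
/-!
Cut ℕ into blocks `[M b, (M + 1) b)`. For even `b`, `s_b(x) ≡ x + s_b(⌊x / b⌋) (mod 2)`,
so an even anti-Niven `x`, whose digit sum must be odd, forces `s_b(⌊x / b⌋)` to be odd.
Since `d` is odd, two consecutive terms of the progression have opposite parities, so every
block containing two consecutive terms has an index with odd digit sum; as `2d ≤ b`, this holds
for every block lying inside the progression. But `s_b(M + 1) = s_b(M) + 1` unless `b ∣ M + 1`,
and a progression with `t d ≥ 2b + 3d` covers two adjacent blocks `M, M + 1` with `b ∤ M + 1`.
-/

lemma sdig_add_mul {b r : ℕ} (hb : 1 < b) (hr : r < b) (q : ℕ) :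
    sdig b (r + b * q) = r + sdig b q := by
  by_cases hrq : r ≠ 0 ∨ q ≠ 0
  · simp [sdig, Nat.digits_add b hb r q hr hrq]
  · obtain ⟨rfl, rfl⟩ : r = 0 ∧ q = 0 := by omega
    simp [sdig]

lemma sdig_eq_mod_add_sdig_div {b : ℕ} (hb : 1 < b) (x : ℕ) :
    sdig b x = x % b + sdig b (x / b) := by
  conv_lhs => rw [← Nat.mod_add_div x b]
  exact sdig_add_mul hb (Nat.mod_lt x (by omega)) _

lemma sdig_succ {b M : ℕ} (hb : 1 < b) (hM : ¬ b ∣ M + 1) :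
    sdig b (M + 1) = sdig b M + 1 := by
  have hr : (M + 1) % b ≠ 0 := fun h => hM (Nat.dvd_of_mod_eq_zero h)
  have hlt : (M + 1) % b < b := Nat.mod_lt _ (by omega)
  have hM' : M = ((M + 1) % b - 1) + b * ((M + 1) / b) := by
    have := Nat.mod_add_div (M + 1) b
    omega
  rw [sdig_eq_mod_add_sdig_div hb (M + 1), hM', sdig_add_mul hb (by omega), ← hM']
  omega

lemma odd_sdig_div_of_even {b x : ℕ} (hb1 : 1 < b) (hb : Even b) (hx : AntiNiven b x)
    (hxe : Even x) : Odd (sdig b (x / b)) := by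
  obtain ⟨-, hgcd⟩ := hx
  have hs : Odd (sdig b x) := by
    by_contra hse
    have h2 := Nat.dvd_gcd hxe.two_dvd (Nat.not_odd_iff_even.mp hse).two_dvd
    rw [hgcd] at h2
    omega
  have hmod : Even (x % b) := by
    have := Nat.mod_add_div x b
    rw [← this, Nat.even_add] at hxe
    exact hxe.mpr (hb.mul_right _)
  rw [sdig_eq_mod_add_sdig_div hb1] at hs
  exact (Nat.odd_add'.mp hs).mpr hmod

lemma odd_sdig_div_of_consecutive {b d x : ℕ} (hb1 : 1 < b) (hb : Even b) (hd : Odd d)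
    (hx : AntiNiven b x) (hxd : AntiNiven b (x + d)) (hblock : (x + d) / b = x / b) :
    Odd (sdig b (x / b)) := by
  rcases Nat.even_or_odd x with hxe | hxo
  · exact odd_sdig_div_of_even hb1 hb hx hxe
  · rw [← hblock]
    exact odd_sdig_div_of_even hb1 hb hxd (hxo.add_odd hd)

lemma exists_mul_mem_Ico (a : ℕ) {d : ℕ} (hd : 0 < d) :
    ∃ j, a ≤ j * d ∧ j * d < a + d := by
  refine ⟨(a + d - 1) / d, ?_⟩
  have := Nat.div_add_mod (a + d - 1) d
  have := Nat.mod_lt (a + d - 1) hd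
  rw [mul_comm]
  omega

lemma exists_consecutive_div_eq {b d n t M : ℕ} (hd : 0 < d) (hdb : 2 * d ≤ b)
    (hn : n ≤ M * b) (ht : M * b + 2 * d ≤ n + t * d) :
    ∃ j, j + 1 < t ∧ (n + j * d) / b = M ∧ (n + j * d + d) / b = M := by
  obtain ⟨j, hj, hjd⟩ := exists_mul_mem_Ico (M * b - n) hd
  have hM : ∀ y, M * b ≤ y → y < M * b + b → y / b = M := fun y h1 h2 =>
    Nat.div_eq_of_lt_le h1 (by rw [add_mul, one_mul]; exact h2)
  refine ⟨j, ?_, hM _ (by omega) (by omega), hM _ (by omega) (by omega)⟩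
  have : (j + 1) * d < t * d := by rw [add_mul, one_mul]; omega
  exact Nat.lt_of_mul_lt_mul_right this

section ArithmeticProgression

variable {b d n t : ℕ} (hb : Even b) (hd : Odd d) (hdb : 2 * d ≤ b)
  (h : ∀ j < t, AntiNiven b (n + j * d))
include hb hd hdb h

lemma odd_sdig_of_le_mul {M : ℕ} (hn : n ≤ M * b) (ht : M * b + 2 * d ≤ n + t * d) :
    Odd (sdig b M) := by
  obtain ⟨j, hjt, hj, hj'⟩ := exists_consecutive_div_eq hd.pos hdb hn ht
  have hj1 : AntiNiven b (n + j * d + d) := by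
    simpa [add_mul, add_assoc] using h (j + 1) hjt
  rw [← hj]
  exact odd_sdig_div_of_consecutive (by have := hd.pos; omega) hb hd (h j (by omega)) hj1
    (hj'.trans hj.symm)

lemma mul_lt_of_forall_antiNiven : t * d < 2 * b + 3 * d := by
  by_contra! ht
  have hb1 : 1 < b := by have := hd.pos; omega
  have ht3 : 3 ≤ t := Nat.le_of_mul_le_mul_right (by omega : 3 * d ≤ t * d) hd.pos
  have hadj : ∀ M, ¬ b ∣ M + 1 → Odd (sdig b M) → ¬ Odd (sdig b (M + 1)) :=
    fun M hM hM' => by rwa [sdig_succ hb1 hM, Nat.odd_add_one, not_not]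
  have hnot_dvd_succ : ∀ m, b ∣ m → ¬ b ∣ m + 1 := fun m hm hm1 =>
    absurd (Nat.le_of_dvd one_pos ((Nat.dvd_add_right hm).mp hm1)) (by omega)
  obtain ⟨q, r, hr, rfl⟩ : ∃ q r, r < b ∧ n = r + q * b :=
    ⟨n / b, n % b, Nat.mod_lt n (by omega), by rw [mul_comm, Nat.mod_add_div]⟩
  have hblock : ∀ k, 1 ≤ k → k * b + 2 * d ≤ r + t * d → Odd (sdig b (q + k)) := by
    intro k hk hkt
    have hqk : (q + k) * b = q * b + k * b := add_mul _ _ _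
    have hbk : b ≤ k * b := Nat.le_mul_of_pos_left b hk
    exact odd_sdig_of_le_mul hb hd hdb h (by omega) (by omega)
  by_cases hq2 : b ∣ q + 2
  · by_cases hrd : r + d < b
    · -- the first two terms share the block `q`
      have hdiv : ∀ y, y < b → (y + q * b) / b = q := fun y hy =>
        Nat.div_eq_of_lt_le (by omega) (by rw [add_mul]; omega)
      have hq : Odd (sdig b q) := by
        have hd' : r + q * b + d = (r + d) + q * b := by ring
        have := odd_sdig_div_of_consecutive hb1 hb hd (by simpa using h 0 (by omega))
          (by simpa using h 1 (by omega)) (by rw [hd', hdiv _ hr, hdiv _ hrd])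
        rwa [hdiv _ hr] at this
      exact hadj q (fun hq1 => hnot_dvd_succ _ hq1 hq2) hq (hblock 1 le_rfl (by omega))
    · exact hadj (q + 2) (hnot_dvd_succ _ hq2) (hblock 2 (by omega) (by omega))
        (hblock 3 (by omega) (by omega))
  · exact hadj (q + 1) hq2 (hblock 1 le_rfl (by omega)) (hblock 2 (by omega) (by omega))

end ArithmeticProgression

theorem stmt_9_general (b d : ℕ) (heven : Even b)
    (hdb : d ≤ b / 2) (hodd : Odd d) :
    ∀ n t : ℕ, (∀ j : ℕ, j < t → AntiNiven b (n + j * d)) →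
      (t : ℤ) ≤ ⌈(2 * b : ℚ) / d⌉ + 2 := by
  intro n t h
  have hlen := mul_lt_of_forall_antiNiven heven hodd (by omega) h
  by_contra! hlt
  have hceil : (2 * b : ℚ) / d ≤ ((t - 3 : ℤ) : ℚ) := Int.ceil_le.mp (by omega)
  rw [div_le_iff₀ (by exact_mod_cast hodd.pos)] at hceil
  push_cast at hceil
  have : ((2 * b + 3 * d : ℕ) : ℚ) ≤ ((t * d : ℕ) : ℚ) := by push_cast; linarith
  exact absurd (by exact_mod_cast this) hlen.not_ge

theorem stmt_9 (b d : ℕ) (hb : 6 ≤ b) (heven : Even b)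
    (hd3 : 3 ≤ d) (hdb : d ≤ b / 2) (hodd : Odd d) :
    ∀ n t : ℕ, (∀ j : ℕ, j < t → AntiNiven b (n + j * d)) →
      (t : ℤ) ≤ ⌈(2 * b : ℚ) / d⌉ + 2 :=
  stmt_9_general b d heven hdb hodd
end

section
/- Let b ≥ 2 be even and let c be a nonnegative integer with s_b(c+1) = s_b(c) + 1. Then s_b(cb² + j(b−1)) = s_b(c) + b − 1 for all 1 ≤ j ≤ b and all b+2 ≤ j ≤ 2b, and s_b(cb² + j(b−1)) = s_b(c) + 2(b−1) for j ∈ {b+1, 2b+1}. -/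
lemma sdig_step {b x : ℕ} (hb : 1 < b) (hx : x < b) (y : ℕ) :
    sdig b (x + b * y) = x + sdig b y := by
  rcases Nat.eq_zero_or_pos (x + b * y) with h | h
  · have hx0 : x = 0 := by omega
    have hy0 : y = 0 := by
      rcases Nat.eq_zero_or_pos y with h' | h'
      · exact h'
      · nlinarith
    simp [hx0, hy0, sdig]
  · unfold sdig
    rw [Nat.digits_def' hb h]
    have h1 : (x + b * y) % b = x := by
      rw [Nat.add_mul_mod_self_left, Nat.mod_eq_of_lt hx]
    have h2 : (x + b * y) / b = y := by
      rw [Nat.add_mul_div_left _ _ (by omega : 0 < b), Nat.div_eq_of_lt hx]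
      omega
    rw [h1, h2, List.sum_cons]

theorem stmt_13 (b c : ℕ) (hb : 2 ≤ b) (heven : Even b)
    (hc : sdig b (c + 1) = sdig b c + 1) :
    (∀ j : ℕ, 1 ≤ j → j ≤ b → sdig b (c * b ^ 2 + j * (b - 1)) = sdig b c + (b - 1)) ∧
    (∀ j : ℕ, b + 2 ≤ j → j ≤ 2 * b → sdig b (c * b ^ 2 + j * (b - 1)) = sdig b c + (b - 1)) ∧
    (∀ j : ℕ, j = b + 1 ∨ j = 2 * b + 1 →
      sdig b (c * b ^ 2 + j * (b - 1)) = sdig b c + 2 * (b - 1)) := by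
  have hb1 : 1 < b := by omega
  refine ⟨?_, ?_, ?_⟩
  · intro j hj1 hj2
    have e : c * b ^ 2 + j * (b - 1) = (b - j) + b * ((j - 1) + b * c) := by
      zify [hj1, hj2, (by omega : 1 ≤ b)]
      ring
    rw [e, sdig_step hb1 (by omega), sdig_step hb1 (by omega)]
    omega
  · intro j hj1 hj2
    have e : c * b ^ 2 + j * (b - 1) = (2 * b - j) + b * ((j - b - 2) + b * (c + 1)) := by
      zify [hj2, (by omega : b ≤ j), (by omega : 2 ≤ j - b), (by omega : 1 ≤ b)]
      ring
    rw [e, sdig_step hb1 (by omega), sdig_step hb1 (by omega), hc]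
    omega
  · rintro j (rfl | rfl)
    · have e : c * b ^ 2 + (b + 1) * (b - 1) = (b - 1) + b * ((b - 1) + b * c) := by
        zify [(by omega : 1 ≤ b)]
        ring
      rw [e, sdig_step hb1 (by omega), sdig_step hb1 (by omega)]
      omega
    · have e : c * b ^ 2 + (2 * b + 1) * (b - 1) = (b - 1) + b * ((b - 2) + b * (c + 1)) := by
        zify [(by omega : 1 ≤ b), (by omega : 2 ≤ b)]
        ring
      rw [e, sdig_step hb1 (by omega), sdig_step hb1 (by omega), hc]
      omega
end

section
/- The maximum length of a sequence of consecutive positive integers each relatively prime to its binary digit sum is 5. In particular, there exist infinitely many runs of 5 consecutive 2-anti-Niven numbers, and no run of 6. -/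
lemma sdig_two_mul_add (b r : ℕ) (hr : r < 2) : sdig 2 (2 * b + r) = sdig 2 b + r := by
  rcases Nat.eq_zero_or_pos (2 * b + r) with h | h
  · have hb : b = 0 := by omega
    have hr0 : r = 0 := by omega
    simp [hb, hr0, sdig]
  · unfold sdig
    rw [Nat.digits_def' (by norm_num : 1 < 2) h]
    have h1 : (2 * b + r) % 2 = r := by omega
    have h2 : (2 * b + r) / 2 = b := by omega
    rw [h1, h2, List.sum_cons]
    ring

lemma sdig_pow_mul_add (k b r : ℕ) (hr : r < 2 ^ k) :
    sdig 2 (2 ^ k * b + r) = sdig 2 b + sdig 2 r := by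
  induction k generalizing r with
  | zero =>
    have : r = 0 := by omega
    simp [this, sdig]
  | succ k ih =>
    have e0 : 2 ^ (k + 1) * b = 2 * (2 ^ k * b) := by rw [pow_succ]; ring
    have h1 : 2 ^ (k + 1) * b + r = 2 * (2 ^ k * b + r / 2) + r % 2 := by
      rw [e0]; omega
    have h2 : r / 2 < 2 ^ k := by
      rw [pow_succ] at hr; omega
    have h3 : r = 2 * (r / 2) + r % 2 := by omega
    rw [h1, sdig_two_mul_add _ _ (Nat.mod_lt _ (by norm_num)), ih _ h2]
    conv_rhs => rw [h3, sdig_two_mul_add _ _ (Nat.mod_lt _ (by norm_num))]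
    ring

lemma sdig0 : sdig 2 0 = 0 := by simp [sdig]
lemma sdig1 : sdig 2 1 = 1 := by
  have := sdig_two_mul_add 0 1 (by norm_num); simpa [sdig0] using this
lemma sdig2 : sdig 2 2 = 1 := by
  have := sdig_two_mul_add 1 0 (by norm_num); simpa [sdig1] using this
lemma sdig3 : sdig 2 3 = 2 := by
  have := sdig_two_mul_add 1 1 (by norm_num); simpa [sdig1] using this
lemma sdig4 : sdig 2 4 = 1 := by
  have := sdig_two_mul_add 2 0 (by norm_num); simpa [sdig2] using this
lemma sdig5 : sdig 2 5 = 2 := by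
  have := sdig_two_mul_add 2 1 (by norm_num); simpa [sdig2] using this

lemma gcd_three (n : ℕ) (h : ¬ 3 ∣ n) : Nat.gcd n 3 = 1 :=
  Nat.coprime_comm.mp ((Nat.prime_three.coprime_iff_not_dvd).mpr h)

lemma gcd_four (n : ℕ) (h : n % 2 = 1) : Nat.gcd n 4 = 1 := by
  have h2 : Nat.Coprime 2 n :=
    (Nat.prime_two.coprime_iff_not_dvd).mpr (by omega)
  have h4 : Nat.Coprime (2 ^ 2) n := Nat.Coprime.pow_left 2 h2
  have : (2 : ℕ) ^ 2 = 4 := by norm_num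
  rw [this] at h4
  exact Nat.coprime_comm.mp h4

theorem stmt_14 :
    {N : ℕ | 0 < N ∧ ∀ j : ℕ, j < 5 → AntiNiven 2 (N + j)}.Infinite ∧
    ¬ ∃ N : ℕ, 0 < N ∧ ∀ j : ℕ, j < 6 → AntiNiven 2 (N + j) := by
  constructor
  · apply Set.infinite_of_injective_forall_mem
      (f := fun j : ℕ => 3 * 2 ^ (j + 3) + 1)
    · intro a b hab
      simp only at hab
      have h2ab : 2 ^ (a + 3) = 2 ^ (b + 3) := by omega
      have := Nat.pow_right_injective (le_refl 2) h2ab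
      omega
    · intro a
      set k := a + 3 with hk
      have hpk : 8 ≤ 2 ^ k := by
        calc (8:ℕ) = 2 ^ 3 := by norm_num
        _ ≤ 2 ^ k := Nat.pow_le_pow_right (by norm_num) (by omega)
      obtain ⟨c, hc⟩ : (2:ℕ) ∣ 2 ^ k := dvd_pow_self 2 (by omega)
      refine ⟨by positivity, ?_⟩
      intro j hj
      have hn : 3 * 2 ^ k + 1 + j = 2 ^ k * 3 + (1 + j) := by ring
      have hs : sdig 2 (3 * 2 ^ k + 1 + j) = 2 + sdig 2 (1 + j) := by
        rw [hn, sdig_pow_mul_add k 3 (1 + j) (by omega), sdig3]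
      refine ⟨by positivity, ?_⟩
      interval_cases j <;> rw [hs] <;>
        norm_num [sdig1, sdig2, sdig3, sdig4, sdig5] <;>
        first
          | exact gcd_three _ (by omega)
          | exact gcd_four _ (by omega)
  · rintro ⟨N, hN, h⟩
    set m := (N + 1) / 2 with hm
    set k := (m + 1) / 2 with hk
    have hbounds : N ≤ 2 * m ∧ 2 * m ≤ N + 1 ∧ m ≤ 2 * k ∧ 2 * k ≤ m + 1 := by omega
    have t1 : sdig 2 (2 * k) = sdig 2 k := by
      have := sdig_two_mul_add k 0 (by norm_num); simpa using this
    have t2 : sdig 2 (2 * k + 1) = sdig 2 k + 1 := sdig_two_mul_add k 1 (by norm_num)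
    have s4k : sdig 2 (4 * k) = sdig 2 k := by
      have e1 : 4 * k = 2 * (2 * k) := by ring
      rw [e1]
      have := sdig_two_mul_add (2 * k) 0 (by norm_num)
      simpa [t1] using this
    have s4k2 : sdig 2 (4 * k + 2) = sdig 2 k + 1 := by
      have e1 : 4 * k + 2 = 2 * (2 * k + 1) := by ring
      rw [e1]
      have := sdig_two_mul_add (2 * k + 1) 0 (by norm_num)
      simpa [t2] using this
    rcases Nat.even_or_odd (sdig 2 k) with he | ho
    · -- 4k has even digit sum, and N ≤ 4k ≤ N+3
      obtain ⟨t, ht⟩ := he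
      have hj := h (4 * k - N) (by omega)
      have hEq : N + (4 * k - N) = 4 * k := by omega
      rw [hEq] at hj
      have hg : (2 : ℕ) ∣ Nat.gcd (4 * k) (sdig 2 (4 * k)) :=
        Nat.dvd_gcd (by omega) (by rw [s4k]; omega)
      rw [hj.2] at hg
      omega
    · -- 4k+2 has even digit sum, and N ≤ 4k+2 ≤ N+5
      obtain ⟨t, ht⟩ := ho
      have hj := h (4 * k + 2 - N) (by omega)
      have hEq : N + (4 * k + 2 - N) = 4 * k + 2 := by omega
      rw [hEq] at hj
      have hg : (2 : ℕ) ∣ Nat.gcd (4 * k + 2) (sdig 2 (4 * k + 2)) :=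
        Nat.dvd_gcd (by omega) (by rw [s4k2]; omega)
      rw [hj.2] at hg
      omega
end

section
/- Let b = 2^r + 1 for some nonnegative integer r. Then there exists a b-anti-Niven arithmetic progression with common difference 2 of length b. -/
lemma sdig_eq (b k d : ℕ) (hb : 1 < b) (hd : d < b) (hk : 0 < k) (hk' : k < b) :
    sdig b (k * b + d) = d + k := by
  unfold sdig
  rw [mul_comm, Nat.digits_def' hb (by positivity), Nat.mul_add_mod, Nat.mul_add_div (by omega),
    Nat.div_eq_of_lt hd, Nat.mod_eq_of_lt hd, Nat.add_zero, Nat.digits_def' hb hk,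
    Nat.mod_eq_of_lt hk', Nat.div_eq_of_lt hk', Nat.digits_zero]
  simp

theorem stmt_16 (r b : ℕ) (hb : b = 2 ^ r + 1) :
    ∃ n : ℕ, 0 < n ∧ ∀ j : ℕ, j < b → AntiNiven b (n + 2 * j) := by
  have hbpos : 0 < b := by rw [hb]; positivity
  refine ⟨b, hbpos, fun j hj => ⟨by omega, ?_⟩⟩
  rcases Nat.eq_zero_or_pos r with hr | hr
  · subst hr; norm_num at hb; subst hb
    interval_cases j <;> norm_num [sdig]
  have hb2 : 3 ≤ b := by
    have : 2 ≤ 2 ^ r := by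
      calc 2 = 2 ^ 1 := rfl
      _ ≤ 2 ^ r := Nat.pow_le_pow_right (by norm_num) hr
    omega
  have hbodd : b % 2 = 1 := by
    have : 2 ^ r % 2 = 0 := by
      rcases Nat.exists_eq_add_of_le hr with ⟨m, rfl⟩
      simp [pow_add, pow_succ, Nat.mul_mod]
    omega
  rcases lt_or_ge (2 * j) b with h | h
  · have e : b + 2 * j = 1 * b + 2 * j := by ring
    rw [e, sdig_eq b 1 (2 * j) (by omega) h one_pos (by omega)]
    have e2 : 1 * b + 2 * j = (2 * j + 1) + 2 ^ r := by omega
    rw [e2]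
    have hcop : Nat.Coprime (2 ^ r) (2 * j + 1) := by
      apply Nat.Coprime.pow_left
      exact Nat.coprime_two_left.mpr (Nat.odd_iff.mpr (by omega))
    have : Nat.Coprime (2 * j + 1 + 2 ^ r) (2 * j + 1) := by
      simpa [Nat.coprime_add_self_left] using hcop
    exact this
  · have e : b + 2 * j = 2 * b + (2 * j - b) := by omega
    rw [e, sdig_eq b 2 (2 * j - b) (by omega) (by omega) (by omega) (by omega)]
    have e2 : 2 * b + (2 * j - b) = ((2 * j - b) + 2) + 2 ^ (r + 1) := by
      have : 2 ^ (r + 1) = 2 * 2 ^ r := by ring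
      omega
    rw [e2]
    have hcop : Nat.Coprime (2 ^ (r + 1)) (2 * j - b + 2) := by
      apply Nat.Coprime.pow_left
      exact Nat.coprime_two_left.mpr (Nat.odd_iff.mpr (by omega))
    have : Nat.Coprime (2 * j - b + 2 + 2 ^ (r + 1)) (2 * j - b + 2) := by
      simpa [Nat.coprime_add_self_left] using hcop
    exact this
end

section
/- Let b be an odd prime. Then for all 1 ≤ j ≤ b−1, gcd(b + j(b−1), s_b(b + j(b−1))) = 1 and gcd(b² + j(b−1), s_b(b² + j(b−1))) = 1. Moreover s_b(b + j(b−1)) = b and s_b(b² + j(b−1)) = b for 1 ≤ j ≤ b−1. -/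
theorem stmt_17 (b : ℕ) (hp : b.Prime) (hodd : Odd b) :
    ∀ j : ℕ, 1 ≤ j → j ≤ b - 1 →
      Nat.gcd (b + j * (b - 1)) (sdig b (b + j * (b - 1))) = 1 ∧
      Nat.gcd (b ^ 2 + j * (b - 1)) (sdig b (b ^ 2 + j * (b - 1))) = 1 ∧
      sdig b (b + j * (b - 1)) = b ∧
      sdig b (b ^ 2 + j * (b - 1)) = b := by
  intro j hj1 hj2
  have hb3 : 3 ≤ b := by
    have := hp.two_le
    obtain ⟨k, hk⟩ := hodd
    omega
  have hb1 : 1 < b := by omega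
  have hb0 : 0 < b := by omega
  have hjb : j < b := by omega
  have key1 : b + j * (b - 1) = (b - j) + b * j := by
    zify [show 1 ≤ b by omega, hjb.le]; ring
  have key2 : b ^ 2 + j * (b - 1) = (b - j) + b * (b + (j - 1)) := by
    zify [show 1 ≤ b by omega, hjb.le, hj1]; ring
  have hmod : ((b - j) + b * j) % b = b - j := by
    rw [Nat.add_mul_mod_self_left, Nat.mod_eq_of_lt (by omega)]
  have hdiv : ((b - j) + b * j) / b = j := by
    rw [Nat.add_mul_div_left _ _ hb0, Nat.div_eq_of_lt (by omega), Nat.zero_add]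
  have hd1 : Nat.digits b 1 = [1] := by
    rw [Nat.digits_def' hb1 (by omega), Nat.mod_eq_of_lt hb1, Nat.div_eq_of_lt hb1,
      Nat.digits_zero]
  have hdj : Nat.digits b j = [j] := by
    rw [Nat.digits_def' hb1 (by omega), Nat.mod_eq_of_lt hjb, Nat.div_eq_of_lt hjb,
      Nat.digits_zero]
  have hD1 : Nat.digits b (b + j * (b - 1)) = [b - j, j] := by
    rw [key1, Nat.digits_def' hb1 (by omega), hmod, hdiv, hdj]
  have hdmid : Nat.digits b (b + (j - 1)) = [j - 1, 1] := by
    have e : b + (j - 1) = (j - 1) + b * 1 := by ring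
    rw [e, Nat.digits_def' hb1 (by omega), Nat.add_mul_mod_self_left,
      Nat.mod_eq_of_lt (by omega), Nat.add_mul_div_left _ _ hb0,
      Nat.div_eq_of_lt (by omega), Nat.zero_add, hd1]
  have hD2 : Nat.digits b (b ^ 2 + j * (b - 1)) = [b - j, j - 1, 1] := by
    have hmod2 : ((b - j) + b * (b + (j - 1))) % b = b - j := by
      rw [Nat.add_mul_mod_self_left, Nat.mod_eq_of_lt (by omega)]
    have hdiv2 : ((b - j) + b * (b + (j - 1))) / b = b + (j - 1) := by
      rw [Nat.add_mul_div_left _ _ hb0, Nat.div_eq_of_lt (by omega), Nat.zero_add]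
    rw [key2, Nat.digits_def' hb1 (by positivity), hmod2, hdiv2, hdmid]
  have hs1 : sdig b (b + j * (b - 1)) = b := by
    simp [sdig, hD1]; omega
  have hs2 : sdig b (b ^ 2 + j * (b - 1)) = b := by
    simp [sdig, hD2]; omega
  have hnd1 : ¬ b ∣ (b + j * (b - 1)) := by
    rw [Nat.dvd_iff_mod_eq_zero, key1, hmod]; omega
  have hnd2 : ¬ b ∣ (b ^ 2 + j * (b - 1)) := by
    rw [Nat.dvd_iff_mod_eq_zero, key2, Nat.add_mul_mod_self_left,
      Nat.mod_eq_of_lt (by omega)]; omega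
  refine ⟨?_, ?_, hs1, hs2⟩
  · rw [hs1]
    exact Nat.Coprime.gcd_eq_one ((hp.coprime_iff_not_dvd.mpr hnd1).symm)
  · rw [hs2]
    exact Nat.Coprime.gcd_eq_one ((hp.coprime_iff_not_dvd.mpr hnd2).symm)
end
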